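/- Every reversible logic gate with fewer than n inputs, when extended to act on n wires by fixing the unused wires, induces an even permutation of the 2^n truth assignments to the n wires. -/
import Mathlib


/-- Extending a reversible gate of arity `k < n` to `n` wires (via an injection of
wire positions) yields an even permutation of the `2^n` truth assignments. -/
theorem gate_extension_even (n k : ℕ) (hkn : k < n)
    (g : Equiv.Perm (Fin k → Bool)) (ι : Fin k ↪ Fin n)
    (P : Equiv.Perm (Fin n → Bool))
    (hP : ∀ x : Fin n → Bool,
      (∀ j : Fin k, P x (ι j) = g (fun j' => x (ι j')) j) ∧
      (∀ i : Fin n, i ∉ Set.range ι → P x i = x i)) :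
    Equiv.Perm.sign P = 1 := by
  classical
  set s : Set (Fin n) := Set.range ι with hs
  -- the reindexing equivalence
  let e : (Fin k ⊕ (sᶜ : Set (Fin n))) ≃ Fin n :=
    (Equiv.sumCongr (Equiv.ofInjective ι ι.injective) (Equiv.refl _)).trans
      (Equiv.Set.sumCompl s)
  let F : (Fin n → Bool) ≃ ((Fin k → Bool) × ((sᶜ : Set (Fin n)) → Bool)) :=
    (Equiv.arrowCongr e (Equiv.refl Bool)).symm.trans
      (Equiv.sumArrowEquivProdArrow (Fin k) _ Bool)
  let Q : Equiv.Perm ((Fin k → Bool) × ((sᶜ : Set (Fin n)) → Bool)) :=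
    Equiv.prodCongrLeft (fun _ => g)
  have heinl : ∀ j : Fin k, e (Sum.inl j) = ι j := fun j => rfl
  have heinr : ∀ c : (sᶜ : Set (Fin n)), e (Sum.inr c) = (c : Fin n) := fun c => rfl
  have hF : ∀ x : Fin n → Bool,
      F x = (fun j => x (ι j), fun c : (sᶜ : Set (Fin n)) => x c.1) := by
    intro x
    rfl
  have key : P = F.symm.permCongr Q := by
    ext x i
    have hFx : F x = (fun j => x (ι j), fun c : (sᶜ : Set (Fin n)) => x c.1) := hF x
    simp only [Equiv.permCongr_apply, Equiv.symm_symm]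
    rw [show F x = (fun j => x (ι j), fun c : (sᶜ : Set (Fin n)) => x c.1) from hFx]
    have hQ : Q (fun j => x (ι j), fun c : (sᶜ : Set (Fin n)) => x c.1) =
        (g (fun j => x (ι j)), fun c : (sᶜ : Set (Fin n)) => x c.1) := rfl
    rw [hQ]
    -- now compute F.symm applied at i
    show P x i = (Equiv.arrowCongr e (Equiv.refl Bool))
        ((Equiv.sumArrowEquivProdArrow (Fin k) _ Bool).symm
          (g (fun j => x (ι j)), fun c : (sᶜ : Set (Fin n)) => x c.1)) i
    simp only [Equiv.arrowCongr_apply, Equiv.refl_apply, Function.comp_apply,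
      Equiv.sumArrowEquivProdArrow]
    by_cases hi : i ∈ s
    · obtain ⟨j, hj⟩ := hi
      have hesymm : e.symm i = Sum.inl j := by
        apply e.injective
        simp [heinl, hj]
      rw [hesymm]
      subst hj
      exact (hP x).1 j
    · have hesymm : e.symm i = Sum.inr ⟨i, hi⟩ := by
        apply e.injective
        simp [heinr]
      rw [hesymm]
      exact (hP x).2 i hi
  rw [key, Equiv.Perm.sign_permCongr]
  have hQs : Equiv.Perm.sign Q = ∏ _c : ((sᶜ : Set (Fin n)) → Bool), Equiv.Perm.sign g :=
    Equiv.Perm.sign_prodCongrLeft (fun _ => g)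
  rw [hQs, Finset.prod_const, Finset.card_univ]
  have hpos : 0 < Fintype.card (sᶜ : Set (Fin n)) := by
    rw [Fintype.card_pos_iff]
    have hex : ∃ i, i ∉ s := by
      by_contra h
      push_neg at h
      have hsurj : Function.Surjective ι := fun i => h i
      have hle := Fintype.card_le_of_surjective ι hsurj
      simp only [Fintype.card_fin] at hle
      omega
    obtain ⟨i, hi⟩ := hex
    exact ⟨⟨i, hi⟩⟩
  have hcard : Fintype.card ((sᶜ : Set (Fin n)) → Bool) = 2 ^ Fintype.card (sᶜ : Set (Fin n)) := by
    simp [Fintype.card_fun]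
  rw [hcard]
  have heven : Even (2 ^ Fintype.card (sᶜ : Set (Fin n))) :=
    Nat.even_pow.mpr ⟨even_two, by omega⟩
  rcases Int.units_eq_one_or (Equiv.Perm.sign g) with h | h <;> rw [h]
  · simp
  · exact heven.neg_one_pow
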